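/- Let P_{AB} be a subnormalised probability distribution on a finite set such that P(a,b) > 0 only if a = f(b) for some function f. Then for ε ≥ 0 with tr(P) > √(2ε), the smooth min-entropy satisfies H^ε_min(A|B)_P ≤ log(1/(tr(P) − √(2ε))). -/

import Mathlib

noncomputable section

/-- Optimal guessing probability of `A` given `B` for a classical subnormalised
distribution. -/
def pguess {A B : Type*} [Fintype A] [Fintype B] [Nonempty A] (P : A × B → ℝ) : ℝ :=
  ∑ b : B, ⨆ a : A, P (a, b)

/-- Classical min-entropy `H_min(A|B)_P = -log P_guess(A|B)` (base 2). -/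
def HminC {A B : Type*} [Fintype A] [Fintype B] [Nonempty A] (P : A × B → ℝ) : ℝ :=
  - Real.logb 2 (pguess P)

/-- Generalised fidelity between subnormalised distributions. -/
def genFidC {T : Type*} [Fintype T] (p q : T → ℝ) : ℝ :=
  (∑ t, Real.sqrt (p t * q t) +
    Real.sqrt ((1 - ∑ t, p t) * (1 - ∑ t, q t)))^2

/-- Classical purified distance. -/
def purDistC {T : Type*} [Fintype T] (p q : T → ℝ) : ℝ :=
  Real.sqrt (1 - genFidC p q)

/-- Classical smooth min-entropy (purified-distance smoothing over subnormalised
distributions). -/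
def HminSmC {A B : Type*} [Fintype A] [Fintype B] [Nonempty A]
    (ε : ℝ) (P : A × B → ℝ) : ℝ :=
  sSup {h : ℝ | ∃ P' : A × B → ℝ, (∀ t, 0 ≤ P' t) ∧ (∑ t, P' t) ≤ 1 ∧
    purDistC P P' ≤ ε ∧ h = HminC P'}

/-!
Any `P'` within purified distance `ε` of `P` is within `ℓ¹`-distance `2ε ≤ √(2ε)` of it
(Fuchs–van de Graaf, after completing both distributions by their missing mass). Since all the
weight of `P` lies on the graph of `f`, guessing `f b` on `P'` already succeeds with probability
at least `tr P − ‖P − P'‖₁`, so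
`H_min(A|B)_{P'} = −log P_guess(A|B)_{P'} ≤ −log (tr P − √(2ε))`.
-/

open Finset

section PurifiedDistance

variable {T : Type*} [Fintype T]

def withMissingMass (p : T → ℝ) : Option T → ℝ :=
  fun o => o.elim (1 - ∑ t, p t) p

lemma withMissingMass_nonneg {p : T → ℝ} (hp0 : ∀ t, 0 ≤ p t) (hp1 : ∑ t, p t ≤ 1) :
    ∀ o, 0 ≤ withMissingMass p o
  | none => sub_nonneg.mpr hp1
  | some t => hp0 t

lemma sum_withMissingMass (p : T → ℝ) : ∑ o, withMissingMass p o = 1 := by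
  simp [Fintype.sum_option, withMissingMass]

lemma genFidC_eq_sq_sum_sqrt_withMissingMass (p q : T → ℝ) :
    genFidC p q = (∑ o, √(withMissingMass p o * withMissingMass q o)) ^ 2 := by
  simp [genFidC, Fintype.sum_option, withMissingMass, add_comm]

/-- Cauchy–Schwarz applied to `|p - q| = |√p - √q| · (√p + √q)`. -/
lemma sq_sum_abs_sub_le {ι : Type*} [Fintype ι] {p q : ι → ℝ}
    (hp : ∀ i, 0 ≤ p i) (hq : ∀ i, 0 ≤ q i) :
    (∑ i, |p i - q i|) ^ 2 ≤
      (∑ i, p i + ∑ i, q i) ^ 2 - 4 * (∑ i, √(p i * q i)) ^ 2 := by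
  have hsqrt_mul : ∀ i, √(p i * q i) = √(p i) * √(q i) := fun i => Real.sqrt_mul (hp i) _
  have hfactor : ∀ i, |p i - q i| = |√(p i) - √(q i)| * (√(p i) + √(q i)) := by
    intro i
    rw [abs_of_nonneg (by positivity : 0 ≤ √(p i) + √(q i)) |>.symm, ← abs_mul]
    congr 1
    nlinarith [Real.sq_sqrt (hp i), Real.sq_sqrt (hq i)]
  have hminus : ∀ i, |√(p i) - √(q i)| ^ 2 = p i + q i - 2 * √(p i * q i) := by
    intro i
    rw [sq_abs, hsqrt_mul]
    nlinarith [Real.sq_sqrt (hp i), Real.sq_sqrt (hq i)]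
  have hplus : ∀ i, (√(p i) + √(q i)) ^ 2 = p i + q i + 2 * √(p i * q i) := by
    intro i
    rw [hsqrt_mul]
    nlinarith [Real.sq_sqrt (hp i), Real.sq_sqrt (hq i)]
  calc (∑ i, |p i - q i|) ^ 2
      = (∑ i, |√(p i) - √(q i)| * (√(p i) + √(q i))) ^ 2 := by simp only [hfactor]
    _ ≤ (∑ i, |√(p i) - √(q i)| ^ 2) * ∑ i, (√(p i) + √(q i)) ^ 2 :=
        sum_mul_sq_le_sq_mul_sq _ _ _
    _ = (∑ i, p i + ∑ i, q i) ^ 2 - 4 * (∑ i, √(p i * q i)) ^ 2 := by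
        simp only [hminus, hplus, sum_add_distrib, sum_sub_distrib, ← mul_sum]
        ring

lemma sum_abs_sub_le_two_mul_purDistC {p q : T → ℝ}
    (hp0 : ∀ t, 0 ≤ p t) (hp1 : ∑ t, p t ≤ 1) (hq0 : ∀ t, 0 ≤ q t) (hq1 : ∑ t, q t ≤ 1) :
    ∑ t, |p t - q t| ≤ 2 * purDistC p q := by
  have hsq :=
    sq_sum_abs_sub_le (withMissingMass_nonneg hp0 hp1) (withMissingMass_nonneg hq0 hq1)
  rw [sum_withMissingMass, sum_withMissingMass, ← genFidC_eq_sq_sum_sqrt_withMissingMass] at hsq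
  have hsome : ∑ t, |p t - q t| ≤ ∑ o, |withMissingMass p o - withMissingMass q o| := by
    rw [Fintype.sum_option]
    exact le_add_of_nonneg_left (abs_nonneg _)
  calc ∑ t, |p t - q t| ≤ ∑ o, |withMissingMass p o - withMissingMass q o| := hsome
    _ ≤ √(2 ^ 2 * (1 - genFidC p q)) := Real.le_sqrt_of_sq_le (by linarith)
    _ = 2 * purDistC p q := by
        rw [Real.sqrt_mul (by norm_num), Real.sqrt_sq zero_le_two, purDistC]

end PurifiedDistance

lemma sum_le_pguess_add_sum_abs_sub {A B : Type*} [Fintype A] [Fintype B] [Nonempty A]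
    {P Q : A × B → ℝ} {f : B → A}
    (hdet : ∀ a b, 0 < P (a, b) → a = f b) :
    ∑ t, P t ≤ pguess Q + ∑ t, |P t - Q t| := by
  rw [Fintype.sum_prod_type_right, Fintype.sum_prod_type_right (fun t => |P t - Q t|), pguess,
    ← sum_add_distrib]
  refine sum_le_sum fun b _ => ?_
  have hcol : ∑ a, P (a, b) ≤ P (f b, b) := by
    classical
    rw [← Fintype.sum_ite_eq' (f b) fun a => P (a, b)]
    refine sum_le_sum fun a _ => ?_
    split_ifs with ha
    · exact ha ▸ le_rfl
    · exact not_lt.mp fun hpos => ha (hdet a b hpos)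
  calc ∑ a, P (a, b) ≤ P (f b, b) := hcol
    _ ≤ Q (f b, b) + |P (f b, b) - Q (f b, b)| := by
        linarith [le_abs_self (P (f b, b) - Q (f b, b))]
    _ ≤ (⨆ a, Q (a, b)) + ∑ a, |P (a, b) - Q (a, b)| :=
        add_le_add
          (le_ciSup (f := fun a => Q (a, b)) (Set.finite_range _).bddAbove (f b))
          (single_le_sum (f := fun a => |P (a, b) - Q (a, b)|) (fun a _ => abs_nonneg _)
            (mem_univ (f b)))

lemma le_sqrt_self_of_sqrt_le_one {x : ℝ} (hx : √x ≤ 1) : x ≤ √x := by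
  rcases le_or_gt x 0 with hx0 | hx0
  · exact hx0.trans (Real.sqrt_nonneg x)
  · nlinarith [Real.sq_sqrt hx0.le, Real.sqrt_nonneg x]

theorem HminSmC_le_of_deterministic_general {A B : Type*} [Fintype A] [Fintype B] [Nonempty A]
    (P : A × B → ℝ) (f : B → A) (ε : ℝ)
    (hP0 : ∀ t, 0 ≤ P t) (hP1 : (∑ t, P t) ≤ 1)
    (hdet : ∀ a b, 0 < P (a, b) → a = f b)
    (htr : Real.sqrt (2 * ε) < ∑ t, P t) :
    HminSmC ε P ≤ Real.logb 2 (1 / ((∑ t, P t) - Real.sqrt (2 * ε))) := by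
  have hc0 : 0 < (∑ t, P t) - √(2 * ε) := sub_pos.mpr htr
  have h2ε : 2 * ε ≤ √(2 * ε) := le_sqrt_self_of_sqrt_le_one (htr.le.trans hP1)
  refine Real.sSup_le ?_ (Real.logb_nonneg one_lt_two ?_)
  · rintro x ⟨P', hP'0, hP'1, hdist, rfl⟩
    have hdist₁ := sum_abs_sub_le_two_mul_purDistC hP0 hP1 hP'0 hP'1
    have hguess : (∑ t, P t) - √(2 * ε) ≤ pguess P' := by
      linarith [sum_le_pguess_add_sum_abs_sub (Q := P') hdet]
    rw [HminC, one_div, Real.logb_inv]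
    exact neg_le_neg ((Real.logb_le_logb one_lt_two hc0 (hc0.trans_le hguess)).mpr hguess)
  · rw [le_div_iff₀ hc0, one_mul]
    linarith [Real.sqrt_nonneg (2 * ε)]

/-- Lemma E.2: if `A` is a function of `B` under `P`, the smooth min-entropy is
at most `log (1/(tr P − √(2ε)))`. -/
theorem HminSmC_le_of_deterministic {A B : Type*} [Fintype A] [Fintype B] [Nonempty A]
    (P : A × B → ℝ) (f : B → A) (ε : ℝ)
    (hP0 : ∀ t, 0 ≤ P t) (hP1 : (∑ t, P t) ≤ 1)
    (hdet : ∀ a b, 0 < P (a, b) → a = f b)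
    (hε : 0 ≤ ε) (htr : Real.sqrt (2 * ε) < ∑ t, P t) :
    HminSmC ε P ≤ Real.logb 2 (1 / ((∑ t, P t) - Real.sqrt (2 * ε))) :=
  HminSmC_le_of_deterministic_general P f ε hP0 hP1 hdet htr

end
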